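/- Let X ∈ ℝ^{M×N} and u ∈ ℝ^M have nonnegative entries, let λ ≥ 0 and μ ≥ 0 satisfy ‖u‖₂² + μ > 0. Then the function v ↦ ‖X − u vᵀ‖_F² + μ ‖v‖₂² + λ ‖v‖₁ on the nonnegative orthant {v ∈ ℝ^N : v ≥ 0} has a unique minimizer v*, given componentwise by v*_n = max( (Σ_{m=1}^M X_{mn} u_m)/(‖u‖₂² + μ) − λ/(2(‖u‖₂² + μ)), 0 ) for each n ∈ {1,…,N}. -/
import Mathlib

lemma key_quad (A b lam t tstar : ℝ) (hA : 0 < A) (ht : 0 ≤ t)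
    (hts : tstar = max ((2*b - lam)/(2*A)) 0) :
    A*(t - tstar)^2 ≤ (A*t^2 - 2*b*t + lam*t) - (A*tstar^2 - 2*b*tstar + lam*tstar) := by
  rcases le_or_gt 0 ((2*b - lam)/(2*A)) with hs | hs
  · rw [max_eq_left hs] at hts
    have h2 : 2*A*tstar = 2*b - lam := by
      rw [hts]; field_simp
    nlinarith [sq_nonneg (t - tstar)]
  · rw [max_eq_right (le_of_lt hs)] at hts
    subst hts
    have : 2*b - lam < 0 := by
      by_contra h
      push_neg at h
      have := div_nonneg h (by linarith : (0:ℝ) ≤ 2*A)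
      linarith
    nlinarith

/-- the elastic-net regularized rank-one Frobenius fitting problem over the
nonnegative orthant has a unique minimizer given componentwise by soft thresholding. -/
theorem stmt_2 (M N : ℕ) (X : Fin M → Fin N → ℝ) (u : Fin M → ℝ)
    (hX : ∀ m n, 0 ≤ X m n) (hu : ∀ m, 0 ≤ u m)
    (lam mu : ℝ) (hlam : 0 ≤ lam) (hmu : 0 ≤ mu)
    (hpos : 0 < (∑ m, (u m)^2) + mu)
    (F : (Fin N → ℝ) → ℝ)
    (hF : F = fun v => (∑ m, ∑ n, (X m n - u m * v n)^2)
        + mu * (∑ n, (v n)^2) + lam * (∑ n, |v n|))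
    (vstar : Fin N → ℝ)
    (hvstar : ∀ n, vstar n = max ((∑ m, X m n * u m) / ((∑ m, (u m)^2) + mu)
        - lam / (2 * ((∑ m, (u m)^2) + mu))) 0) :
    ((∀ n, 0 ≤ vstar n) ∧
      (∀ v : Fin N → ℝ, (∀ n, 0 ≤ v n) → F vstar ≤ F v)) ∧
    (∀ v : Fin N → ℝ, (∀ n, 0 ≤ v n) →
      (∀ v' : Fin N → ℝ, (∀ n, 0 ≤ v' n) → F v ≤ F v') → v = vstar) := by
  set A : ℝ := (∑ m, (u m)^2) + mu with hA
  set b : Fin N → ℝ := fun n => ∑ m, X m n * u m with hb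
  set c : Fin N → ℝ := fun n => ∑ m, (X m n)^2 with hc
  have hvs : ∀ n, vstar n = max ((2 * b n - lam)/(2*A)) 0 := by
    intro n
    rw [hvstar n]
    congr 1
    rw [div_sub_div _ _ (ne_of_gt hpos) (by positivity : 2*A ≠ 0)]
    rw [div_eq_div_iff (by positivity) (by positivity)]
    ring
  have hvsnn : ∀ n, 0 ≤ vstar n := fun n => by rw [hvs n]; exact le_max_right _ _
  -- decomposition of F
  have hFsum : ∀ w : Fin N → ℝ, (∀ n, 0 ≤ w n) →
      F w = (∑ n, (A * (w n)^2 - 2 * b n * w n + lam * w n)) + ∑ n, c n := by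
    intro w hw
    simp only [hF]
    rw [Finset.sum_comm]
    have habs : ∀ n, |w n| = w n := fun n => abs_of_nonneg (hw n)
    simp only [habs]
    have expand : ∀ n : Fin N, ∑ m, (X m n - u m * w n)^2
        = c n - 2 * b n * w n + (∑ m, (u m)^2) * (w n)^2 := by
      intro n
      have : ∀ m : Fin M, (X m n - u m * w n)^2
          = (X m n)^2 - 2 * (X m n * u m) * w n + (u m)^2 * (w n)^2 := by
        intro m; ring
      rw [Finset.sum_congr rfl (fun m _ => this m)]
      rw [Finset.sum_add_distrib, Finset.sum_sub_distrib, ← Finset.sum_mul,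
        ← Finset.sum_mul, ← Finset.mul_sum]
    rw [Finset.sum_congr rfl (fun n _ => expand n)]
    rw [Finset.mul_sum, Finset.mul_sum, ← Finset.sum_add_distrib,
      ← Finset.sum_add_distrib, ← Finset.sum_add_distrib]
    apply Finset.sum_congr rfl
    intro n _
    simp only [hA]
    ring
  -- key coordinatewise bound
  have hkey : ∀ (v : Fin N → ℝ), (∀ n, 0 ≤ v n) →
      F vstar + ∑ n, A * (v n - vstar n)^2 ≤ F v := by
    intro v hv
    rw [hFsum v hv, hFsum vstar hvsnn]
    have : ∑ n, A * (v n - vstar n)^2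
        ≤ ∑ n, ((A * (v n)^2 - 2 * b n * v n + lam * v n)
            - (A * (vstar n)^2 - 2 * b n * vstar n + lam * vstar n)) := by
      apply Finset.sum_le_sum
      intro n _
      exact key_quad A (b n) lam (v n) (vstar n) hpos (hv n) (hvs n)
    rw [Finset.sum_sub_distrib] at this
    linarith
  have hmin : ∀ v : Fin N → ℝ, (∀ n, 0 ≤ v n) → F vstar ≤ F v := by
    intro v hv
    have h1 := hkey v hv
    have h2 : 0 ≤ ∑ n, A * (v n - vstar n)^2 := by positivity
    linarith
  refine ⟨⟨hvsnn, hmin⟩, ?_⟩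
  intro v hv hvopt
  have h1 := hkey v hv
  have h2 := hvopt vstar hvsnn
  have h3 : ∑ n, A * (v n - vstar n)^2 ≤ 0 := by linarith
  have h4 : ∀ n ∈ Finset.univ, A * (v n - vstar n)^2 = 0 := by
    intro n _
    have := Finset.sum_nonneg (fun n (_ : n ∈ Finset.univ) =>
      by positivity : ∀ n ∈ Finset.univ, (0:ℝ) ≤ A * (v n - vstar n)^2)
    have h0 : ∑ n, A * (v n - vstar n)^2 = 0 := le_antisymm h3 this
    exact (Finset.sum_eq_zero_iff_of_nonneg (fun n _ => by positivity)).mp h0 n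
      (Finset.mem_univ n)
  funext n
  have := h4 n (Finset.mem_univ n)
  have h5 : (v n - vstar n)^2 = 0 := by
    rcases mul_eq_zero.mp this with h | h
    · exact absurd h (ne_of_gt hpos)
    · exact h
  have := pow_eq_zero_iff (n := 2) (by norm_num) |>.mp h5
  linarith
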